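/- arXiv:cs/0609015 — 2 statements merged into one kernel-verified Lean document; each statement's English description precedes it below -/
import Mathlib

section
/- Let L be a regular tree language and A_can its canonical bottom-up automaton. Then A_can is a bottom-up residual finite tree automaton; more precisely, for every state q of A_can, the state language of q in A_can equals the prime residual associated to q: C_q = t_q⁻¹L. -/
/-- Terms over a ranked alphabet `F` with arity function `arity`. -/
inductive Term (F : Type) (arity : F → ℕ) : Type where
  | node (f : F) (children : Fin (arity f) → Term F arity) : Term F arity

/-- Contexts: terms with exactly one occurrence of the hole `◇`. -/
inductive Ctx (F : Type) (arity : F → ℕ) : Type where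
  | hole : Ctx F arity
  | node (f : F) (i : Fin (arity f)) (c : Ctx F arity)
      (sib : (j : Fin (arity f)) → j ≠ i → Term F arity) : Ctx F arity

/-- `c.fill t` replaces the hole of `c` by the term `t`. -/
def Ctx.fill {F : Type} {arity : F → ℕ} : Ctx F arity → Term F arity → Term F arity
  | .hole, t => t
  | .node f i c sib, t => .node f (fun j => if h : j = i then c.fill t else sib j h)

/-- Bottom-up residual of the tree language `L` w.r.t. the term `t`:
the set of contexts `c` with `c[t] ∈ L`. -/
def bres {F : Type} {arity : F → ℕ} (L : Set (Term F arity)) (t : Term F arity) :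
    Set (Ctx F arity) := {c | c.fill t ∈ L}

/-- Bottom-up finite tree automaton with state type `Q`:
final states and a set of rules `f(q₁,…,qₙ) → q`. -/
structure BUTA (F : Type) (arity : F → ℕ) (Q : Type) where
  final : Set Q
  rules : (f : F) → (Fin (arity f) → Q) → Q → Prop

/-- Reachability `t →*_A q`. -/
inductive BUTA.Reach {F Q : Type} {arity : F → ℕ} (A : BUTA F arity Q) :
    Term F arity → Q → Prop
  | node {f : F} {ch : Fin (arity f) → Term F arity} {qs : Fin (arity f) → Q} {q : Q} :
      A.rules f qs q → (∀ i, A.Reach (ch i) (qs i)) → A.Reach (.node f ch) q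

/-- Language recognized by a bottom-up tree automaton. -/
def BUTA.lang {F Q : Type} {arity : F → ℕ} (A : BUTA F arity Q) : Set (Term F arity) :=
  {t | ∃ q ∈ A.final, A.Reach t q}

/-- `A.CReach q0 c q` : putting state `q0` in the hole of `c`, the automaton can reach `q`
at the root (extending `→*_A` to terms over `F ∪ Q` by `q →*_A q`). -/
inductive BUTA.CReach {F Q : Type} {arity : F → ℕ} (A : BUTA F arity Q) (q0 : Q) :
    Ctx F arity → Q → Prop
  | hole : A.CReach q0 .hole q0
  | node {f : F} {i : Fin (arity f)} {c : Ctx F arity}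
      {sib : (j : Fin (arity f)) → j ≠ i → Term F arity}
      {qs : Fin (arity f) → Q} {q : Q} :
      A.rules f qs q → A.CReach q0 c (qs i) →
      (∀ j (h : j ≠ i), A.Reach (sib j h) (qs j)) →
      A.CReach q0 (.node f i c sib) q

/-- State language `C_q`: the set of contexts accepted by the state `q`. -/
def BUTA.stateLang {F Q : Type} {arity : F → ℕ} (A : BUTA F arity Q) (q : Q) :
    Set (Ctx F arity) := {c | ∃ qf ∈ A.final, A.CReach q c qf}

/-- A bottom-up automaton is deterministic iff no two rules share a left-hand side. -/
def BUTA.Deterministic {F Q : Type} {arity : F → ℕ} (A : BUTA F arity Q) : Prop :=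
  ∀ (f : F) (qs : Fin (arity f) → Q) (q q' : Q), A.rules f qs q → A.rules f qs q' → q = q'

/-- Bottom-up residual finite tree automaton: each state language is a residual of `L(A)`. -/
def IsRFTA {F Q : Type} {arity : F → ℕ} (A : BUTA F arity Q) : Prop :=
  ∀ q : Q, ∃ t : Term F arity, A.stateLang q = bres A.lang t

/-- A bottom-up residual is composite iff it is the union of the bottom-up residuals
of `L` that it strictly contains. -/
def IsCompositeRes {F : Type} {arity : F → ℕ} (L : Set (Term F arity))
    (t : Term F arity) : Prop :=
  bres L t = ⋃ t' ∈ {t' : Term F arity | bres L t' ⊂ bres L t}, bres L t'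

/-- A bottom-up residual is prime iff it is not composite. -/
def IsPrimeRes {F : Type} {arity : F → ℕ} (L : Set (Term F arity))
    (t : Term F arity) : Prop := ¬ IsCompositeRes L t

/-- The canonical bottom-up automaton of `L`, given a family `tq` of representative terms
(one per prime bottom-up residual of `L`): final states are the `q` with `◇ ∈ t_q⁻¹L`,
and the rules are the `f(q₁,…,qₙ) → q` with `t_q⁻¹L ⊆ f(t_{q₁},…,t_{qₙ})⁻¹L`. -/
def canonBU {F : Type} {arity : F → ℕ} (L : Set (Term F arity)) {Q : Type}
    (tq : Q → Term F arity) : BUTA F arity Q where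
  final := {q | Ctx.hole ∈ bres L (tq q)}
  rules f qs q := bres L (tq q) ⊆ bres L (.node f (fun i => tq (qs i)))

/-!
Soundness: by induction on runs, `t →* q` gives `t_q⁻¹L ⊆ t⁻¹L` and `c[q] →* q'` gives
`t_{q'}⁻¹L ⊆ c[t_q]⁻¹L`, because every rule `f(q₁,…,qₙ) → q` of `A_can` has
`t_q⁻¹L ⊆ f(t_{q₁},…,t_{qₙ})⁻¹L` and residuals are a congruence.

Completeness: since `L` has finitely many residuals, a residual minimal among those containing a
context `c` is prime, so every residual is the union of the `t_q⁻¹L` it contains. Given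
`c ∈ f(t₁,…,tₙ)⁻¹L`, replacing the children one at a time by representatives `t_{qᵢ}` reached from
them keeps `c` in the residual, and a final `t_q⁻¹L ∋ c` below `f(t_{q₁},…,t_{qₙ})⁻¹L` is exactly
a rule `f(q₁,…,qₙ) → q`. Running this along the path to the hole of `c` yields `c ∈ C_q` whenever
`c ∈ t_q⁻¹L`.
-/

section

variable {F : Type} {arity : F → ℕ}

def Ctx.comp : Ctx F arity → Ctx F arity → Ctx F arity
  | .hole, d => d
  | .node f i c sib, d => .node f i (c.comp d) sib

theorem Ctx.fill_comp (c d : Ctx F arity) (t : Term F arity) :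
    (c.comp d).fill t = c.fill (d.fill t) := by
  induction c with
  | hole => rfl
  | node f i c sib ih => simp only [Ctx.comp, Ctx.fill, ih]

theorem Ctx.fill_node_hole (f : F) (i : Fin (arity f)) (ch : Fin (arity f) → Term F arity)
    (u : Term F arity) :
    (Ctx.node f i .hole fun j _ => ch j).fill u = .node f (Function.update ch i u) := by
  simp only [Ctx.fill, dite_eq_ite]
  exact congrArg _ (funext fun j => (Function.update_apply ch i u j).symm)

theorem mem_bres_comp {L : Set (Term F arity)} {c d : Ctx F arity} {t : Term F arity} :
    c.comp d ∈ bres L t ↔ c ∈ bres L (d.fill t) := by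
  simp only [bres, Set.mem_ofPred_eq, Ctx.fill_comp]

-- The children are exchanged one at a time, each inside the context formed by `c` and the
-- current other children.
theorem exists_children_mem_bres_node {L : Set (Term F arity)} {f : F}
    {ch : Fin (arity f) → Term F arity} {P : Fin (arity f) → Term F arity → Prop}
    (hP : ∀ i, ∀ d ∈ bres L (ch i), ∃ u, P i u ∧ d ∈ bres L u)
    {c : Ctx F arity} (hc : c ∈ bres L (.node f ch)) :
    ∃ ch', (∀ i, P i (ch' i)) ∧ c ∈ bres L (.node f ch') := by
  classical
  suffices ∀ s : Finset (Fin (arity f)), ∃ ch', (∀ i ∈ s, P i (ch' i)) ∧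
      (∀ i ∉ s, ch' i = ch i) ∧ c ∈ bres L (.node f ch') by
    obtain ⟨ch', hP', -, hc'⟩ := this Finset.univ
    exact ⟨ch', fun i => hP' i (Finset.mem_univ i), hc'⟩
  intro s
  induction s using Finset.induction_on with
  | empty => exact ⟨ch, by simp, fun _ _ => rfl, hc⟩
  | insert a s ha ih =>
    obtain ⟨ch', hs, hout, hc'⟩ := ih
    have hd : c.comp (.node f a .hole fun j _ => ch' j) ∈ bres L (ch a) := by
      rwa [mem_bres_comp, Ctx.fill_node_hole, ← hout a ha, Function.update_eq_self]
    obtain ⟨u, hu, hdu⟩ := hP a _ hd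
    refine ⟨Function.update ch' a u, fun i hi => ?_, fun i hi => ?_, ?_⟩
    · rcases eq_or_ne i a with rfl | hia
      · simpa using hu
      · simpa [hia] using hs i ((Finset.mem_insert.1 hi).resolve_left hia)
    · rw [Finset.mem_insert, not_or] at hi
      rw [Function.update_of_ne hi.1, hout i hi.2]
    · rwa [mem_bres_comp, Ctx.fill_node_hole] at hdu

theorem bres_node_mono {L : Set (Term F arity)} {f : F} {ch ch' : Fin (arity f) → Term F arity}
    (h : ∀ i, bres L (ch i) ⊆ bres L (ch' i)) :
    bres L (.node f ch) ⊆ bres L (.node f ch') := by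
  intro c hc
  obtain ⟨ch'', hch'', hc''⟩ :=
    exists_children_mem_bres_node (P := fun i u => u = ch' i) (fun i d hd => ⟨_, rfl, h i hd⟩) hc
  rwa [funext hch''] at hc''

def IsResidualBasis {Q : Type} (L : Set (Term F arity)) (tq : Q → Term F arity) : Prop :=
  ∀ t, ∀ c ∈ bres L t, ∃ q, bres L (tq q) ⊆ bres L t ∧ c ∈ bres L (tq q)

theorem exists_isPrimeRes_of_mem_bres {L : Set (Term F arity)}
    (hfin : (Set.range (bres L)).Finite) {t : Term F arity} {c : Ctx F arity}
    (hc : c ∈ bres L t) :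
    ∃ t', IsPrimeRes L t' ∧ bres L t' ⊆ bres L t ∧ c ∈ bres L t' := by
  set S := {R | R ∈ Set.range (bres L) ∧ R ⊆ bres L t ∧ c ∈ R}
  obtain ⟨_, ⟨⟨t', rfl⟩, ht't, hct'⟩, hmin⟩ :=
    (hfin.subset fun _ hR => hR.1 : S.Finite).exists_minimal ⟨_, ⟨t, rfl⟩, subset_rfl, hc⟩
  refine ⟨t', fun hcomp => ?_, ht't, hct'⟩
  rw [IsCompositeRes] at hcomp
  rw [hcomp] at hct'
  obtain ⟨t'', ht''t', hct''⟩ := Set.mem_iUnion₂.1 hct'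
  exact ht''t'.2 (hmin ⟨⟨t'', rfl⟩, ht''t'.1.trans ht't, hct''⟩ ht''t'.1)

theorem isResidualBasis_of_finite {Q : Type} {L : Set (Term F arity)} {tq : Q → Term F arity}
    (hfin : (Set.range (bres L)).Finite)
    (hsurj : ∀ t, IsPrimeRes L t → ∃ q, bres L (tq q) = bres L t) :
    IsResidualBasis L tq := by
  intro t c hc
  obtain ⟨t', hprime, ht't, hct'⟩ := exists_isPrimeRes_of_mem_bres hfin hc
  obtain ⟨q, hq⟩ := hsurj t' hprime
  exact ⟨q, hq ▸ ht't, hq ▸ hct'⟩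

namespace BUTA

variable {Q : Type} (A : BUTA F arity Q)

theorem reach_fill_iff (c : Ctx F arity) (t : Term F arity) (q : Q) :
    A.Reach (c.fill t) q ↔ ∃ q₀, A.Reach t q₀ ∧ A.CReach q₀ c q := by
  induction c generalizing q with
  | hole => exact ⟨fun h => ⟨q, h, .hole⟩, fun ⟨_, h, hc⟩ => by cases hc; exact h⟩
  | node f i c sib ih =>
    constructor
    · rintro ⟨hr, hch⟩
      obtain ⟨q₀, ht, hc⟩ := (ih _).1 (by simpa using hch i)
      exact ⟨q₀, ht, .node hr hc fun j hj => by simpa [hj] using hch j⟩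
    · rintro ⟨q₀, ht, hc⟩
      cases hc with | node hr hc hsib =>
      refine .node hr fun j => ?_
      rcases eq_or_ne j i with rfl | hj
      · simpa using (ih _).2 ⟨q₀, ht, hc⟩
      · simpa [hj] using hsib j hj

theorem bres_lang (t : Term F arity) : bres A.lang t = ⋃ (q) (_ : A.Reach t q), A.stateLang q := by
  ext c
  simp only [bres, lang, stateLang, reach_fill_iff, Set.mem_ofPred_eq, Set.mem_iUnion]
  grind

theorem finite_range_bres [Finite Q] : (Set.range (bres A.lang)).Finite :=
  (Set.finite_range fun S : Set Q => ⋃ q ∈ S, A.stateLang q).subset <| by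
    rintro _ ⟨t, rfl⟩
    exact ⟨{q | A.Reach t q}, (A.bres_lang t).symm⟩

end BUTA

namespace canonBU

variable {Q : Type} {L : Set (Term F arity)} {tq : Q → Term F arity}

theorem bres_subset_of_reach {t : Term F arity} {q : Q} (h : (canonBU L tq).Reach t q) :
    bres L (tq q) ⊆ bres L t := by
  induction h with
  | @node _ _ _ _ hr _ ih => exact hr.trans (bres_node_mono ih)

theorem bres_subset_of_creach {c : Ctx F arity} {q₀ q : Q} (h : (canonBU L tq).CReach q₀ c q) :
    bres L (tq q) ⊆ bres L (c.fill (tq q₀)) := by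
  induction h with
  | hole => exact subset_rfl
  | @node _ i _ _ _ _ hr _ hsib ih =>
    refine hr.trans (bres_node_mono fun j => ?_)
    rcases eq_or_ne j i with rfl | hj
    · simpa using ih
    · simpa [hj] using bres_subset_of_reach (hsib j hj)

theorem exists_rule_of_mem_bres_node (hB : IsResidualBasis L tq) {f : F}
    {ch : Fin (arity f) → Term F arity} {R : Fin (arity f) → Q → Prop}
    (hR : ∀ i, ∀ d ∈ bres L (ch i), ∃ q, R i q ∧ d ∈ bres L (tq q))
    {c : Ctx F arity} (hc : c ∈ bres L (.node f ch)) :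
    ∃ qs q, (∀ i, R i (qs i)) ∧ (canonBU L tq).rules f qs q ∧ c ∈ bres L (tq q) := by
  obtain ⟨ch', hch', hc'⟩ := exists_children_mem_bres_node
    (P := fun i u => ∃ q, R i q ∧ u = tq q)
    (fun i d hd => by
      obtain ⟨q, hq, hdq⟩ := hR i d hd
      exact ⟨tq q, ⟨q, hq, rfl⟩, hdq⟩) hc
  choose qs hqs hch'qs using hch'
  obtain ⟨q, hrule, hcq⟩ := hB _ c (funext hch'qs ▸ hc')
  exact ⟨qs, q, hqs, hrule, hcq⟩

theorem exists_reach_of_mem_bres (hB : IsResidualBasis L tq) (t : Term F arity) :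
    ∀ c ∈ bres L t, ∃ q, (canonBU L tq).Reach t q ∧ c ∈ bres L (tq q) := by
  induction t with
  | node f ch ih =>
    intro c hc
    obtain ⟨qs, q, hqs, hrule, hcq⟩ := exists_rule_of_mem_bres_node hB ih hc
    exact ⟨q, .node hrule hqs, hcq⟩

theorem exists_creach_of_mem_bres (hB : IsResidualBasis L tq) (q₀ : Q) (c : Ctx F arity) :
    ∀ e ∈ bres L (c.fill (tq q₀)), ∃ q, (canonBU L tq).CReach q₀ c q ∧ e ∈ bres L (tq q) := by
  induction c with
  | hole => exact fun e he => ⟨q₀, .hole, he⟩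
  | node f i c sib ih =>
    intro e he
    let R j q := if h : j = i then (canonBU L tq).CReach q₀ c q
      else (canonBU L tq).Reach (sib j h) q
    have hR : ∀ j, ∀ d ∈ bres L (if h : j = i then c.fill (tq q₀) else sib j h),
        ∃ q, R j q ∧ d ∈ bres L (tq q) := by
      intro j d hd
      rcases eq_or_ne j i with rfl | hj
      · simpa [R] using ih d (by simpa using hd)
      · simpa [R, hj] using exists_reach_of_mem_bres hB (sib j hj) d (by simpa [hj] using hd)
    obtain ⟨qs, q, hqs, hrule, heq⟩ := exists_rule_of_mem_bres_node hB hR he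
    exact ⟨q, .node hrule (by simpa [R] using hqs i) fun j hj => by simpa [R, hj] using hqs j, heq⟩

theorem lang_eq (hB : IsResidualBasis L tq) : (canonBU L tq).lang = L := by
  ext t
  constructor
  · rintro ⟨q, hq, hreach⟩
    exact bres_subset_of_reach hreach hq
  · intro ht
    obtain ⟨q, hreach, hq⟩ := exists_reach_of_mem_bres hB t .hole ht
    exact ⟨q, hq, hreach⟩

theorem stateLang_eq (hB : IsResidualBasis L tq) (q : Q) :
    (canonBU L tq).stateLang q = bres L (tq q) := by
  ext c
  constructor
  · rintro ⟨qf, hqf, hcreach⟩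
    exact bres_subset_of_creach hcreach hqf
  · intro hc
    obtain ⟨qf, hcreach, hqf⟩ := exists_creach_of_mem_bres hB q c .hole hc
    exact ⟨qf, hqf, hcreach⟩

end canonBU

end

theorem canonBU_isRFTA_general {F Q : Type} {arity : F → ℕ}
    (L : Set (Term F arity))
    (hreg : ∃ (Q' : Type) (_ : Fintype Q') (A : BUTA F arity Q'), A.lang = L)
    (tq : Q → Term F arity)
    (hsurj : ∀ t : Term F arity, IsPrimeRes L t → ∃ q, bres L (tq q) = bres L t) :
    IsRFTA (canonBU L tq) ∧
    ∀ q : Q, (canonBU L tq).stateLang q = bres L (tq q) := by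
  obtain ⟨Q', _, A, rfl⟩ := hreg
  have hB : IsResidualBasis A.lang tq := isResidualBasis_of_finite A.finite_range_bres hsurj
  refine ⟨fun q => ⟨tq q, ?_⟩, canonBU.stateLang_eq hB⟩
  rw [canonBU.lang_eq hB, canonBU.stateLang_eq hB]

/-- For a regular tree language `L`, the canonical bottom-up automaton
`A_can` is a ↑-RFTA; more precisely, for every state `q`, `C_q = t_q⁻¹L`. -/
theorem canonBU_isRFTA {F Q : Type} [Fintype F] [Fintype Q] {arity : F → ℕ}
    (_hconst : ∃ a : F, arity a = 0) (L : Set (Term F arity))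
    (hreg : ∃ (Q' : Type) (_ : Fintype Q') (A : BUTA F arity Q'), A.lang = L)
    (tq : Q → Term F arity)
    (hprime : ∀ q, IsPrimeRes L (tq q))
    (hinj : ∀ q q', bres L (tq q) = bres L (tq q') → q = q')
    (hsurj : ∀ t : Term F arity, IsPrimeRes L t → ∃ q, bres L (tq q) = bres L t) :
    IsRFTA (canonBU L tq) ∧
    ∀ q : Q, (canonBU L tq).stateLang q = bres L (tq q) :=
  canonBU_isRFTA_general L hreg tq hsurj
end

section
/- Let L be a regular tree language. In any bottom-up residual finite tree automaton A recognizing L, every prime bottom-up residual of L is the state language of some state of A. Consequently, every ↑-RFTA recognizing L has at least as many states as the number of prime bottom-up residuals of L, so the canonical automaton A_can is a smallest (in number of states) ↑-RFTA recognizing L. -/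
lemma reach_fill {F Q : Type} {arity : F → ℕ} (A : BUTA F arity Q)
    {t : Term F arity} {c : Ctx F arity} {qf : Q} :
    A.Reach (c.fill t) qf ↔ ∃ q, A.Reach t q ∧ A.CReach q c qf := by
  constructor
  · intro h
    induction c generalizing qf with
    | hole => exact ⟨qf, h, .hole⟩
    | node f i c sib ih =>
      cases h with
      | @node _ _ qs _ hr hch =>
        have hi : A.Reach (c.fill t) (qs i) := by simpa using hch i
        obtain ⟨q, hq, hc⟩ := ih hi
        refine ⟨q, hq, .node hr hc ?_⟩
        intro j hj
        have hj' := hch j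
        simp only [dif_neg hj] at hj'
        exact hj'
  · rintro ⟨q, hq, hc⟩
    induction hc with
    | hole => exact hq
    | @node f i c sib qs q' hr hc hsib ih =>
      refine .node hr ?_
      intro j
      by_cases h : j = i
      · subst h; simpa using ih
      · simpa only [dif_neg h] using hsib j h

lemma stateLang_sub {F Q : Type} {arity : F → ℕ} (A : BUTA F arity Q)
    {t : Term F arity} {q : Q} (h : A.Reach t q) :
    A.stateLang q ⊆ bres A.lang t := by
  rintro c ⟨qf, hqf, hc⟩
  exact ⟨qf, hqf, (reach_fill A).2 ⟨q, h, hc⟩⟩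

/-- In any ↑-RFTA `A` recognizing a regular tree language `L`, every
prime bottom-up residual of `L` is a state language of `A`; consequently `A` has at least
as many states as there are prime residuals of `L`, i.e. the canonical automaton is a
smallest ↑-RFTA recognizing `L`. -/
theorem rfta_prime_residuals_are_stateLangs {F Q Qc : Type} [Fintype F] [Fintype Q]
    [Fintype Qc] {arity : F → ℕ}
    (_hconst : ∃ a : F, arity a = 0) (L : Set (Term F arity))
    (hreg : ∃ (Q' : Type) (_ : Fintype Q') (A : BUTA F arity Q'), A.lang = L)
    (A : BUTA F arity Q) (hA : IsRFTA A) (hAL : A.lang = L)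
    (tq : Qc → Term F arity)
    (hprime : ∀ q, IsPrimeRes L (tq q))
    (hinj : ∀ q q', bres L (tq q) = bres L (tq q') → q = q')
    (hsurj : ∀ t : Term F arity, IsPrimeRes L t → ∃ q, bres L (tq q) = bres L t) :
    (∀ t : Term F arity, IsPrimeRes L t → ∃ q : Q, A.stateLang q = bres L t) ∧
    Fintype.card Qc ≤ Fintype.card Q := by
  have part1 : ∀ t : Term F arity, IsPrimeRes L t → ∃ q : Q, A.stateLang q = bres L t := by
    intro t ht
    by_contra hno
    push_neg at hno
    apply ht
    apply Set.Subset.antisymm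
    · intro c hc
      have hc' : c.fill t ∈ A.lang := by rw [hAL]; exact hc
      obtain ⟨qf, hqf, hr⟩ := hc'
      obtain ⟨q, hq, hcr⟩ := (reach_fill A).1 hr
      obtain ⟨t', ht'⟩ := hA q
      have hsub : bres L t' ⊆ bres L t := by
        rw [← hAL, ← ht']; exact stateLang_sub A hq
      have hne : bres L t' ≠ bres L t := by
        intro he
        exact hno q (by rw [ht', hAL, he])
      refine Set.mem_biUnion (show t' ∈ _ from lt_of_le_of_ne hsub hne) ?_
      rw [← hAL, ← ht']
      exact ⟨qf, hqf, hcr⟩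
    · intro c hc
      simp only [Set.mem_iUnion] at hc
      obtain ⟨t', ht', hct'⟩ := hc
      exact ht'.1 hct'
  refine ⟨part1, ?_⟩
  have hch : ∀ qc : Qc, ∃ q : Q, A.stateLang q = bres L (tq qc) :=
    fun qc => part1 (tq qc) (hprime qc)
  choose s hs using hch
  have hsinj : Function.Injective s := by
    intro q q' h
    apply hinj
    rw [← hs q, ← hs q', h]
  exact Fintype.card_le_of_injective s hsinj
end
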